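/- Consider the single-state performative MDP with two actions: a policy is a number θ ∈ [0,1] (the probability of playing action a), the policy-dependent rewards are r_θ(a) = 1/2 − εθ and r_θ(b) = 1/2 + εθ for a fixed ε ∈ (0, 1/4), and the performative value of θ is V(θ) = (θ(1/2 − εθ) + (1−θ)(1/2 + εθ))/(1−γ) for a discount factor γ ∈ [0,1). Call θ performatively stable if θ maximizes θ' ↦ (θ'(1/2 − εθ) + (1−θ')(1/2 + εθ))/(1−γ) over [0,1]. Then: θ = 0 is the unique performatively stable policy, V(0) = 1/(2(1−γ)), V(1/4) = (1/2 + ε/8)/(1−γ), and hence the performatively optimal value sup_{θ ∈ [0,1]} V(θ) is strictly larger than the performative value of every performatively stable policy. -/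
import Mathlib


noncomputable section

/-- Performative value of the policy `θ` (probability of playing action `a`) in the
single-state example: `V(θ) = (θ(1/2 − εθ) + (1−θ)(1/2 + εθ))/(1−γ)`. -/
def V (γ ε θ : ℝ) : ℝ :=
  (θ * (1 / 2 - ε * θ) + (1 - θ) * (1 / 2 + ε * θ)) / (1 - γ)

/-- `θ` is performatively stable: `θ ∈ [0,1]` and `θ` maximizes
`θ' ↦ (θ'(1/2 − εθ) + (1−θ')(1/2 + εθ))/(1−γ)` over `[0,1]`
(the environment is fixed at the response to `θ`). -/
def StablePolicy (γ ε θ : ℝ) : Prop :=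
  θ ∈ Set.Icc (0 : ℝ) 1 ∧
  ∀ θ' ∈ Set.Icc (0 : ℝ) 1,
    (θ' * (1 / 2 - ε * θ) + (1 - θ') * (1 / 2 + ε * θ)) / (1 - γ) ≤
      (θ * (1 / 2 - ε * θ) + (1 - θ) * (1 / 2 + ε * θ)) / (1 - γ)

/-- in the single-state performative MDP, `θ = 0` is the unique
performatively stable policy, `V(0) = 1/(2(1−γ))`, `V(1/4) = (1/2 + ε/8)/(1−γ)`, and the
performatively optimal value exceeds the value of every performatively stable policy. -/
theorem single_state_example
    (γ ε : ℝ) (hγ0 : 0 ≤ γ) (hγ1 : γ < 1) (hε0 : 0 < ε) (hε1 : ε < 1 / 4) :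
    StablePolicy γ ε 0 ∧
    (∀ θ : ℝ, StablePolicy γ ε θ → θ = 0) ∧
    V γ ε 0 = 1 / (2 * (1 - γ)) ∧
    V γ ε (1 / 4) = (1 / 2 + ε / 8) / (1 - γ) ∧
    ∀ θ : ℝ, StablePolicy γ ε θ →
      V γ ε θ < ⨆ θ' : Set.Icc (0 : ℝ) 1, V γ ε θ' := by
  have h1γ : (0 : ℝ) < 1 - γ := by linarith
  have hstab : StablePolicy γ ε 0 := by
    constructor
    · constructor <;> norm_num
    · intro θ' hθ'
      have h1 : θ' * (1 / 2 - ε * 0) + (1 - θ') * (1 / 2 + ε * 0) = 1 / 2 := by ring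
      have h2 : (0:ℝ) * (1 / 2 - ε * 0) + (1 - 0) * (1 / 2 + ε * 0) = 1 / 2 := by ring
      rw [h1, h2]
  have huniq : ∀ θ : ℝ, StablePolicy γ ε θ → θ = 0 := by
    intro θ ⟨⟨hθ0, hθ1⟩, hmax⟩
    have h0 := hmax 0 (by constructor <;> norm_num)
    have h0' := (div_le_div_iff_of_pos_right h1γ).mp h0
    by_contra h
    have hpos : 0 < θ := lt_of_le_of_ne hθ0 (Ne.symm h)
    nlinarith [mul_pos (mul_pos hε0 hpos) hpos]
  have hV0 : V γ ε 0 = 1 / (2 * (1 - γ)) := by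
    unfold V
    rw [show (0:ℝ) * (1 / 2 - ε * 0) + (1 - 0) * (1 / 2 + ε * 0) = 1 / 2 by ring, div_div]
  have hV14 : V γ ε (1 / 4) = (1 / 2 + ε / 8) / (1 - γ) := by
    unfold V; field_simp; ring
  refine ⟨hstab, huniq, hV0, hV14, ?_⟩
  intro θ hθ
  have hθeq := huniq θ hθ
  subst hθeq
  have hbdd : BddAbove (Set.range fun θ' : Set.Icc (0 : ℝ) 1 => V γ ε θ') := by
    refine ⟨(1 / 2 + ε) / (1 - γ), ?_⟩
    rintro _ ⟨⟨x, hx0, hx1⟩, rfl⟩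
    unfold V
    apply div_le_div_of_nonneg_right ?_ h1γ.le
    nlinarith [mul_nonneg hε0.le (mul_nonneg hx0 hx0)]
  have hle : V γ ε (1 / 4) ≤ ⨆ θ' : Set.Icc (0 : ℝ) 1, V γ ε θ' :=
    le_ciSup hbdd ⟨1 / 4, by constructor <;> norm_num⟩
  have hlt : V γ ε 0 < V γ ε (1 / 4) := by
    rw [hV0, hV14]
    rw [(div_div (1:ℝ) 2 (1 - γ)).symm]
    apply div_lt_div_of_pos_right ?_ h1γ
    linarith
  exact hlt.trans_le hle
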